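/- arXiv:2302.03913 — 4 statements merged into one kernel-verified Lean document; each statement's English description precedes it below -/
import Mathlib

section
/- Let X be a finite set and ≻ a strict linear order on X. Define ρ^≻(D, x) = 1 if x ≻ y for all y ∈ D∖{x}, and 0 otherwise. Then for every x ∈ D ⊆ X with D nonempty, the Block–Marschak polynomial K(ρ^≻, D, x) equals 1 if (y ≻ x for all y ∈ X∖D and x ≻ y for all y ∈ D∖{x}), and 0 otherwise. -/
/-!
Write a superset of `D` as `D ∪ S` with `S ⊆ Dᶜ`. Since `ρ^≻` is multiplicative under unions,
`K(ρ^≻, D, x) = ρ^≻(D, x) · ∑_{S ⊆ Dᶜ} (-1)^|S| ρ^≻(S, x)`. For `x ∉ S`, `ρ^≻(S, x)` is the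
indicator of `S ⊆ L := {y ∈ Dᶜ | y ≺ x}`, so the alternating sum collapses to
`∑_{S ⊆ L} (-1)^|S|`, which is `1` if `L = ∅` and `0` otherwise.
-/

open Finset

variable {α : Type*} [Fintype α] [LinearOrder α]

/-- The Block–Marschak polynomial `K(ρ, D, x) = ∑_{E ⊇ D} (-1)^{|E \ D|} ρ(E, x)`. -/
noncomputable def bmK (ρ : Finset α → α → ℝ) (D : Finset α) (x : α) : ℝ :=
  ∑ E : Finset α, if D ⊆ E then (-1 : ℝ) ^ (E \ D).card * ρ E x else 0

/-- The deterministic stochastic choice function induced by the strict linear order `>`: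
`ρ^≻(D,x) = 1` if `x ≻ y` for all `y ∈ D∖{x}`, and `0` otherwise. -/
noncomputable def rhoOrd (D : Finset α) (x : α) : ℝ :=
  if ∀ y ∈ D, y ≠ x → x > y then 1 else 0

namespace Finset

theorem sum_powerset_neg_one_pow_card' {R β : Type*} [Ring R] [DecidableEq β] (s : Finset β) :
    ∑ S ∈ s.powerset, (-1 : R) ^ #S = if s = ∅ then 1 else 0 := by
  have h := congrArg (Int.cast : ℤ → R) (sum_powerset_neg_one_pow_card (x := s))
  push_cast at h
  rw [h]

theorem sum_ite_subset_eq_sum_powerset_compl {β M : Type*} [Fintype β] [DecidableEq β]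
    [AddCommMonoid M] (D : Finset β) (f : Finset β → M) :
    ∑ E, (if D ⊆ E then f E else 0) = ∑ S ∈ Dᶜ.powerset, f (D ∪ S) := by
  rw [← sum_filter]
  refine sum_nbij' (· \ D) (D ∪ ·) ?_ ?_ ?_ ?_ ?_ <;> intro S hS <;>
    simp only [mem_filter, mem_univ, true_and, mem_powerset] at hS ⊢
  · exact subset_compl_iff_disjoint_left.mpr disjoint_sdiff
  · exact subset_union_left
  · exact union_sdiff_of_subset hS
  · exact union_sdiff_cancel_left (subset_compl_iff_disjoint_left.mp hS)
  · rw [union_sdiff_of_subset hS]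

end Finset

theorem bmK_eq_sum_powerset_compl (ρ : Finset α → α → ℝ) (D : Finset α) (x : α) :
    bmK ρ D x = ∑ S ∈ Dᶜ.powerset, (-1 : ℝ) ^ #S * ρ (D ∪ S) x := by
  rw [bmK, sum_ite_subset_eq_sum_powerset_compl]
  refine sum_congr rfl fun S hS => ?_
  rw [union_sdiff_cancel_left (subset_compl_iff_disjoint_left.mp (mem_powerset.mp hS))]

theorem rhoOrd_union (A B : Finset α) (x : α) :
    rhoOrd (A ∪ B) x = rhoOrd A x * rhoOrd B x := by
  simp only [rhoOrd, mem_union, ite_zero_mul_ite_zero, one_mul, or_imp, forall_and]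

theorem rhoOrd_eq_ite_subset {S : Finset α} {x : α} (hx : x ∉ S) :
    rhoOrd S x = if S ⊆ ({y | y < x} : Finset α) then 1 else 0 := by
  refine if_congr ⟨fun h y hy => ?_, fun h y hy _ => ?_⟩ rfl rfl
  · exact mem_filter.mpr ⟨mem_univ y, h y hy (ne_of_mem_of_not_mem hy hx)⟩
  · exact (mem_filter.mp (h hy)).2

theorem sum_powerset_neg_one_pow_card_mul_rhoOrd {C : Finset α} {x : α} (hx : x ∉ C) :
    ∑ S ∈ C.powerset, (-1 : ℝ) ^ #S * rhoOrd S x = if ∀ y ∈ C, x < y then 1 else 0 := by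
  have hfilter :
      {S ∈ C.powerset | S ⊆ ({y | y < x} : Finset α)} = {y ∈ C | y < x}.powerset := by
    ext S
    simp only [mem_filter, mem_powerset, subset_iff, mem_univ, true_and, ← forall_and]
  calc ∑ S ∈ C.powerset, (-1 : ℝ) ^ #S * rhoOrd S x
      = ∑ S ∈ {y ∈ C | y < x}.powerset, (-1 : ℝ) ^ #S := by
        rw [← hfilter, sum_filter]
        refine sum_congr rfl fun S hS => ?_
        rw [rhoOrd_eq_ite_subset fun hxS => hx (mem_powerset.mp hS hxS), mul_ite, mul_one,
          mul_zero]
    _ = if ∀ y ∈ C, x < y then 1 else 0 := by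
        rw [sum_powerset_neg_one_pow_card']
        refine if_congr (filter_eq_empty_iff.trans <| forall₂_congr fun y hy => ?_) rfl rfl
        exact not_lt.trans (ne_of_mem_of_not_mem hy hx).ge_iff_gt

theorem stmt_2_general (D : Finset α) (x : α) (hx : x ∈ D) :
    bmK rhoOrd D x =
      if (∀ y, y ∉ D → y > x) ∧ (∀ y ∈ D, y ≠ x → x > y) then 1 else 0 := by
  calc bmK rhoOrd D x
      = rhoOrd D x * ∑ S ∈ Dᶜ.powerset, (-1 : ℝ) ^ #S * rhoOrd S x := by
        simp only [bmK_eq_sum_powerset_compl, rhoOrd_union, mul_left_comm _ (rhoOrd D x), mul_sum]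
    _ = rhoOrd D x * if ∀ y ∈ Dᶜ, x < y then 1 else 0 := by
        rw [sum_powerset_neg_one_pow_card_mul_rhoOrd (notMem_compl.mpr hx)]
    _ = _ := by
        simp only [rhoOrd, ite_zero_mul_ite_zero, one_mul, mem_compl, gt_iff_lt, and_comm]

/-- `K(ρ^≻, D, x)` equals the indicator that everything outside `D` beats `x` and
`x` beats everything else in `D`. -/
theorem stmt_2 (D : Finset α) (x : α) (hD : D.Nonempty) (hx : x ∈ D) :
    bmK rhoOrd D x =
      if (∀ y, y ∉ D → y > x) ∧ (∀ y ∈ D, y ≠ x → x > y) then 1 else 0 :=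
  stmt_2_general D x hx
end

section
/- Let X be a finite set and ≻ a strict linear order on X. Define ρ^≻(D,x) = 1 if x is the ≻-maximum of D and 0 otherwise. Then for every x ∈ D ⊆ X (D nonempty), K(ρ^≻, D, x) ≥ 0, and K(ρ^≻, D, x) = 0 whenever there exists y ∈ D∖{x} with y ≻ x. -/
open Finset

variable {α : Type*} [Fintype α] [LinearOrder α]

/-! `ρ^≻(E, x)` is the indicator of `E ⊆ L`, where `L = {y | y ≤ x}`, so `K(ρ^≻, D, x)` is the
alternating sum `∑_{D ⊆ E ⊆ L} (-1)^{|E \ D|}`: the Möbius function of the Boolean lattice,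
equal to `1` if `D = L` and `0` otherwise. An element `y ∈ D` with `y ≻ x` rules out `D = L`. -/

theorem Finset.sum_Icc_neg_one_pow_card_sdiff {β R : Type*} [DecidableEq β] [Ring R]
    {D S : Finset β} (h : D ⊆ S) :
    ∑ E ∈ Icc D S, (-1 : R) ^ #(E \ D) = if D = S then 1 else 0 := by
  have hcancel : ∀ F ∈ (S \ D).powerset, (D ∪ F) \ D = F := fun F hF ↦
    union_sdiff_cancel_left (disjoint_sdiff.mono_right (mem_powerset.1 hF))
  have hinj : Set.InjOn (D ∪ ·) (S \ D).powerset := fun F hF G hG hFG ↦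
    (hcancel F hF).symm.trans ((congrArg (· \ D) hFG).trans (hcancel G hG))
  have hS : S \ D = ∅ ↔ D = S := by rw [sdiff_eq_empty_iff_subset, ← h.ge_iff_eq]
  calc ∑ E ∈ Icc D S, (-1 : R) ^ #(E \ D)
      = ∑ F ∈ (S \ D).powerset, (-1 : R) ^ #F := by
        rw [Icc_eq_image_powerset h, sum_image hinj]
        exact sum_congr rfl fun F hF ↦ by rw [hcancel F hF]
    _ = ((∑ F ∈ (S \ D).powerset, (-1 : ℤ) ^ #F : ℤ) : R) := by push_cast; rfl
    _ = if D = S then 1 else 0 := by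
        rw [sum_powerset_neg_one_pow_card]
        simp [hS]

theorem bmK_eq_ite_of_indicator {ρ : Finset α → α → ℝ} {x : α} {S : Finset α}
    (hρ : ∀ E, ρ E x = if E ⊆ S then 1 else 0) (D : Finset α) :
    bmK ρ D x = if D = S then 1 else 0 := by
  have hsum : bmK ρ D x = ∑ E ∈ Icc D S, (-1 : ℝ) ^ #(E \ D) := by
    simp only [bmK, hρ, mul_ite, mul_one, mul_zero, ← ite_and, ← sum_filter]
    congr 1
    ext E
    simp
  rw [hsum]
  by_cases hDS : D ⊆ S
  · exact sum_Icc_neg_one_pow_card_sdiff hDS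
  · rw [Icc_eq_empty (fun h ↦ hDS h), sum_empty, if_neg (fun h ↦ hDS h.le)]

theorem rhoOrd_eq_ite (E : Finset α) (x : α) :
    rhoOrd E x = if E ⊆ ({y | y ≤ x} : Finset α) then 1 else 0 := by
  unfold rhoOrd
  congr 1
  simp only [subset_iff, mem_filter_univ, eq_iff_iff]
  refine forall₂_congr fun y _ ↦ ?_
  rw [le_iff_lt_or_eq, or_iff_not_imp_right, ← ne_eq, ne_comm]

theorem bmK_rhoOrd (D : Finset α) (x : α) :
    bmK rhoOrd D x = if D = ({y | y ≤ x} : Finset α) then 1 else 0 :=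
  bmK_eq_ite_of_indicator (rhoOrd_eq_ite · x) D

theorem stmt_3_general (D : Finset α) (x : α) :
    0 ≤ bmK rhoOrd D x ∧
      ((∃ y ∈ D, y ≠ x ∧ y > x) → bmK rhoOrd D x = 0) := by
  rw [bmK_rhoOrd]
  refine ⟨by split_ifs <;> norm_num, ?_⟩
  rintro ⟨y, hyD, -, hxy⟩
  refine if_neg fun hD ↦ ?_
  rw [hD, mem_filter_univ] at hyD
  exact hxy.not_ge hyD

/-- `K(ρ^≻, D, x) ≥ 0`, and it vanishes whenever some `y ∈ D∖{x}` beats `x`. -/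
theorem stmt_3 (D : Finset α) (x : α) (hD : D.Nonempty) (hx : x ∈ D) :
    0 ≤ bmK rhoOrd D x ∧
      ((∃ y ∈ D, y ≠ x ∧ y > x) → bmK rhoOrd D x = 0) :=
  stmt_3_general D x
end

section
/- Let (𝒩, 𝒜) be a finite directed network with distinguished distinct nodes s and t, and let l, u : 𝒜 → ℝ₊ with l(D,E) ≤ u(D,E) for all arcs. There exists a flow f : 𝒜 → ℝ₊ (satisfying net outflow 1 at s, flow conservation at all other nodes except t, and net inflow 1 at t) with l(a) ≤ f(a) ≤ u(a) for all arcs a, if and only if for every subset 𝒞 ⊆ 𝒩: Σ_{(D,E)∈𝒞×𝒞ᶜ, (D,E)∈𝒜} u(D,E) − Σ_{(D,E)∈𝒞ᶜ×𝒞, (D,E)∈𝒜} l(D,E) ≥ 1 if s ∈ 𝒞 and t ∉ 𝒞; ≥ −1 if t ∈ 𝒞 and s ∉ 𝒞; and ≥ 0 otherwise. -/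
/-!
Finding `f` with `l ≤ f ≤ u` and net outflow `N f = b` is a linear feasibility problem: separating
`b` from the compact convex set `N '' [l, u]` (Hahn–Banach), a flow exists iff for every potential
`y : V → ℝ`, `⟪b, y⟫ ≤ ∑ₐ (uₐ (y tailₐ - y headₐ)⁺ - lₐ (y headₐ - y tailₐ)⁺)`, the right side being
the maximum of `⟪N f, y⟫` over the box. For `y = 𝟙_C` this is the cut condition for `C`.
Conversely, the right side is the integral over `θ` of the capacity of the superlevel cut
`{y > θ}` and, as `∑ b = 0`, `⟪b, y⟫` is the integral of the demand of that cut, so the cut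
conditions integrate to the potential condition.
-/

open Finset MeasureTheory

theorem mul_sub_le_of_mem_Icc {l u f : ℝ} (hf : l ≤ f ∧ f ≤ u) (x z : ℝ) :
    f * (x - z) ≤ u * max (x - z) 0 - l * max (z - x) 0 := by
  rcases le_total z x with h | h
  · rw [max_eq_left (sub_nonneg.2 h), max_eq_right (sub_nonpos.2 h)]
    nlinarith
  · rw [max_eq_right (sub_nonpos.2 h), max_eq_left (sub_nonneg.2 h)]
    nlinarith

theorem ite_mul_sub_eq (l u x z : ℝ) :
    (if z ≤ x then u else l) * (x - z) = u * max (x - z) 0 - l * max (z - x) 0 := by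
  split_ifs with h
  · rw [max_eq_left (sub_nonneg.2 h), max_eq_right (sub_nonpos.2 h)]
    ring
  · rw [max_eq_right (sub_nonpos.2 (not_le.1 h).le), max_eq_left (sub_nonneg.2 (not_le.1 h).le)]
    ring

theorem integrable_indicator_Ico_one (z x : ℝ) : Integrable ((Set.Ico z x).indicator (1 : ℝ → ℝ)) :=
  (integrableOn_const measure_Ico_lt_top.ne).integrable_indicator measurableSet_Ico

theorem integral_indicator_Ico_one (z x : ℝ) :
    ∫ θ, (Set.Ico z x).indicator (1 : ℝ → ℝ) θ = max (x - z) 0 := by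
  rw [integral_indicator_one measurableSet_Ico, Real.volume_real_Ico]

theorem sum_single_sub_single {V : Type*} [DecidableEq V] (s t : V) (C : Finset V) :
    ∑ D ∈ C, (Pi.single s 1 - Pi.single t 1 : V → ℝ) D =
      if s ∈ C ∧ t ∉ C then 1 else if t ∈ C ∧ s ∉ C then -1 else 0 := by
  simp only [Pi.sub_apply, sum_sub_distrib, sum_pi_single']
  by_cases hs : s ∈ C <;> by_cases ht : t ∈ C <;> simp [hs, ht]

namespace Network

variable {V : Type*} [DecidableEq V] (A : Finset (V × V))

def netOutflow : (V × V → ℝ) →ₗ[ℝ] (V → ℝ) where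
  toFun f D := ∑ a ∈ A with a.1 = D, f a - ∑ a ∈ A with a.2 = D, f a
  map_add' f g := by
    ext D
    simp only [Pi.add_apply, sum_add_distrib]
    ring
  map_smul' c f := by
    ext D
    simp only [Pi.smul_apply, smul_eq_mul, RingHom.id_apply, ← mul_sum]
    ring

theorem netOutflow_apply (f : V × V → ℝ) (D : V) :
    netOutflow A f D = ∑ a ∈ A with a.1 = D, f a - ∑ a ∈ A with a.2 = D, f a :=
  rfl

def cutCapacity (l u : V × V → ℝ) (C : Finset V) : ℝ :=
  ∑ a ∈ A with a.1 ∈ C ∧ a.2 ∉ C, u a - ∑ a ∈ A with a.1 ∉ C ∧ a.2 ∈ C, l a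

def potentialCapacity (l u : V × V → ℝ) (y : V → ℝ) : ℝ :=
  ∑ a ∈ A, (u a * max (y a.1 - y a.2) 0 - l a * max (y a.2 - y a.1) 0)

theorem potentialCapacity_indicator (l u : V × V → ℝ) (C : Finset V) :
    potentialCapacity A l u (fun D => if D ∈ C then 1 else 0) = cutCapacity A l u C := by
  rw [potentialCapacity, cutCapacity, sum_filter, sum_filter, ← sum_sub_distrib]
  refine sum_congr rfl fun a _ => ?_
  by_cases h₁ : a.1 ∈ C <;> by_cases h₂ : a.2 ∈ C <;> simp [h₁, h₂]

theorem sum_netOutflow_mul [Fintype V] (f : V × V → ℝ) (y : V → ℝ) :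
    ∑ D, netOutflow A f D * y D = ∑ a ∈ A, f a * (y a.1 - y a.2) := by
  simp only [netOutflow_apply, sub_mul, sum_mul, sum_sub_distrib, mul_sub]
  congr 1
  · rw [← sum_fiberwise A Prod.fst (fun a => f a * y a.1)]
    exact sum_congr rfl fun D _ => sum_congr rfl fun a ha => by rw [(mem_filter.1 ha).2]
  · rw [← sum_fiberwise A Prod.snd (fun a => f a * y a.2)]
    exact sum_congr rfl fun D _ => sum_congr rfl fun a ha => by rw [(mem_filter.1 ha).2]

theorem netOutflow_eq_single_sub_single_iff {s t : V} (hst : s ≠ t) (f : V × V → ℝ) :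
    netOutflow A f = Pi.single s 1 - Pi.single t 1 ↔
      netOutflow A f s = 1 ∧ (∀ D, D ≠ s → D ≠ t → netOutflow A f D = 0) ∧
        netOutflow A f t = -1 := by
  refine ⟨fun h => by simp +contextual [h, hst, hst.symm],
    fun ⟨hs, hD, ht⟩ => funext fun D => ?_⟩
  by_cases hDs : D = s
  · subst hDs
    simp [hs, hst]
  by_cases hDt : D = t
  · subst hDt
    simp [ht, hDs]
  simp [hD D hDs hDt, hDs, hDt]

variable [Fintype V] {A} {l u : V × V → ℝ} {b : V → ℝ}

theorem sum_mul_le_potentialCapacity_of_netOutflow_eq {f : V × V → ℝ}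
    (hf : ∀ a ∈ A, l a ≤ f a ∧ f a ≤ u a) (hfb : netOutflow A f = b) (y : V → ℝ) :
    ∑ D, b D * y D ≤ potentialCapacity A l u y := by
  rw [← hfb, sum_netOutflow_mul]
  exact sum_le_sum fun a ha => mul_sub_le_of_mem_Icc (hf a ha) _ _

theorem sum_le_cutCapacity_of_forall_sum_mul_le
    (h : ∀ y : V → ℝ, ∑ D, b D * y D ≤ potentialCapacity A l u y) (C : Finset V) :
    ∑ D ∈ C, b D ≤ cutCapacity A l u C := by
  simpa [potentialCapacity_indicator] using h fun D => if D ∈ C then 1 else 0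

theorem exists_netOutflow_eq_of_forall_sum_mul_le (hlu : ∀ a ∈ A, l a ≤ u a)
    (h : ∀ y : V → ℝ, ∑ D, b D * y D ≤ potentialCapacity A l u y) :
    ∃ f : V × V → ℝ, (∀ a ∈ A, l a ≤ f a ∧ f a ≤ u a) ∧ netOutflow A f = b := by
  set lo := A.piecewise l 0
  set hi := A.piecewise u 0
  suffices hb : b ∈ netOutflow A '' Set.Icc lo hi by
    obtain ⟨f, ⟨hlo, hhi⟩, rfl⟩ := hb
    refine ⟨f, fun a ha => ⟨?_, ?_⟩, rfl⟩
    · simpa [lo, ha] using hlo a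
    · simpa [hi, ha] using hhi a
  by_contra hb
  obtain ⟨g, c, hg, hgb⟩ := geometric_hahn_banach_closed_point
    ((convex_Icc lo hi).linear_image (netOutflow A))
    (isCompact_Icc.image (netOutflow A).continuous_of_finiteDimensional).isClosed hb
  set y : V → ℝ := fun D => g fun E => if D = E then 1 else 0
  have hgy : ∀ x, g x = ∑ D, x D * y D := fun x =>
    (g : (V → ℝ) →ₗ[ℝ] ℝ).pi_apply_eq_sum_univ x
  -- the vertex of the box maximising `g ∘ netOutflow A`
  set f : V × V → ℝ := fun a => if y a.2 ≤ y a.1 then hi a else lo a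
  have hf : f ∈ Set.Icc lo hi := by
    have hle : lo ≤ hi := fun a => by by_cases ha : a ∈ A <;> simp [lo, hi, ha, hlu a]
    constructor <;> intro a <;> by_cases hy : y a.2 ≤ y a.1 <;> simp [f, hy, hle a]
  have hgf : g (netOutflow A f) = potentialCapacity A l u y := by
    rw [hgy, sum_netOutflow_mul]
    refine sum_congr rfl fun a ha => ?_
    simpa [f, lo, hi, ha] using ite_mul_sub_eq (l a) (u a) (y a.1) (y a.2)
  linarith [hg _ ⟨f, hf, rfl⟩, h y, hgy b]

theorem cutCapacity_superlevel (l u : V × V → ℝ) (y : V → ℝ) (θ : ℝ) :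
    cutCapacity A l u {D | θ < y D} = ∑ a ∈ A, (u a * (Set.Ico (y a.2) (y a.1)).indicator 1 θ
      - l a * (Set.Ico (y a.1) (y a.2)).indicator 1 θ) := by
  rw [cutCapacity, sum_filter, sum_filter, ← sum_sub_distrib]
  refine sum_congr rfl fun a _ => ?_
  simp only [mem_filter, mem_univ, true_and, Set.indicator_apply, Set.mem_Ico, not_lt,
    Pi.one_apply, mul_ite, mul_one, mul_zero, and_comm]

theorem integrable_cutCapacity_superlevel_and_integral_eq (l u : V × V → ℝ) (y : V → ℝ) :
    Integrable (fun θ => cutCapacity A l u {D | θ < y D}) ∧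
      ∫ θ, cutCapacity A l u {D | θ < y D} = potentialCapacity A l u y := by
  simp only [cutCapacity_superlevel]
  have hint : ∀ a ∈ A, Integrable fun θ => u a * (Set.Ico (y a.2) (y a.1)).indicator 1 θ
      - l a * (Set.Ico (y a.1) (y a.2)).indicator 1 θ := fun a _ =>
    ((integrable_indicator_Ico_one _ _).const_mul _).sub
      ((integrable_indicator_Ico_one _ _).const_mul _)
  refine ⟨integrable_finsetSum A hint, ?_⟩
  rw [integral_finsetSum A hint, potentialCapacity]
  refine sum_congr rfl fun a _ => ?_
  rw [integral_sub ((integrable_indicator_Ico_one _ _).const_mul _)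
    ((integrable_indicator_Ico_one _ _).const_mul _), integral_const_mul, integral_const_mul,
    integral_indicator_Ico_one, integral_indicator_Ico_one]

theorem sum_mul_le_potentialCapacity_of_forall_sum_le_cutCapacity (hb : ∑ D, b D = 0)
    (hcut : ∀ C : Finset V, ∑ D ∈ C, b D ≤ cutCapacity A l u C) (y : V → ℝ) :
    ∑ D, b D * y D ≤ potentialCapacity A l u y := by
  obtain ⟨m, hm⟩ := (Set.finite_range y).bddBelow
  have hmy : ∀ D, m ≤ y D := fun D => hm ⟨D, rfl⟩
  have hlevel : ∀ θ, ∑ D, b D * (Set.Ico m (y D)).indicator 1 θ = ∑ D ∈ {D | θ < y D}, b D := by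
    intro θ
    rcases lt_or_ge θ m with hθ | hθ
    · have hall : ({D | θ < y D} : Finset V) = univ :=
        eq_univ_of_forall fun D => by simpa using hθ.trans_le (hmy D)
      simp [hall, hb, not_le.2 hθ]
    · simp [sum_filter, Set.indicator_apply, hθ]
  have hint : ∀ D ∈ (univ : Finset V),
      Integrable fun θ => b D * (Set.Ico m (y D)).indicator 1 θ := fun D _ =>
    (integrable_indicator_Ico_one _ _).const_mul _
  obtain ⟨hint_cut, hcap⟩ := integrable_cutCapacity_superlevel_and_integral_eq (A := A) l u y
  calc ∑ D, b D * y D = ∑ D, b D * (y D - m) := by simp [mul_sub, ← sum_mul, hb]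
    _ = ∫ θ, ∑ D, b D * (Set.Ico m (y D)).indicator 1 θ := by
      rw [integral_finsetSum _ hint]
      refine sum_congr rfl fun D _ => ?_
      rw [integral_const_mul, integral_indicator_Ico_one, max_eq_left (sub_nonneg.2 (hmy D))]
    _ ≤ ∫ θ, cutCapacity A l u {D | θ < y D} :=
      integral_mono (integrable_finsetSum _ hint) hint_cut fun θ => (hlevel θ).trans_le (hcut _)
    _ = potentialCapacity A l u y := hcap

theorem exists_netOutflow_eq_iff_forall_sum_le_cutCapacity (hlu : ∀ a ∈ A, l a ≤ u a)
    (hb : ∑ D, b D = 0) :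
    (∃ f : V × V → ℝ, (∀ a ∈ A, l a ≤ f a ∧ f a ≤ u a) ∧ netOutflow A f = b) ↔
      ∀ C : Finset V, ∑ D ∈ C, b D ≤ cutCapacity A l u C :=
  ⟨fun ⟨_, hf, hfb⟩ => sum_le_cutCapacity_of_forall_sum_mul_le
      (sum_mul_le_potentialCapacity_of_netOutflow_eq hf hfb),
    fun hcut => exists_netOutflow_eq_of_forall_sum_mul_le hlu
      (sum_mul_le_potentialCapacity_of_forall_sum_le_cutCapacity hb hcut)⟩

end Network

/-- Feasibility theorem for flows with lower and upper capacity bounds on a finite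
directed network `(V, A)` with source `s` and sink `t`. -/
theorem stmt_5 {V : Type*} [Fintype V] [DecidableEq V]
    (A : Finset (V × V)) (s t : V) (hst : s ≠ t)
    (l u : V × V → ℝ) (hl0 : ∀ a ∈ A, 0 ≤ l a) (hlu : ∀ a ∈ A, l a ≤ u a) :
    (∃ f : V × V → ℝ,
      (∀ a ∈ A, 0 ≤ f a) ∧
      (∀ a ∈ A, l a ≤ f a ∧ f a ≤ u a) ∧
      (∑ a ∈ A.filter (fun a => a.1 = s), f a)
        - (∑ a ∈ A.filter (fun a => a.2 = s), f a) = 1 ∧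
      (∀ D : V, D ≠ s → D ≠ t →
        (∑ a ∈ A.filter (fun a => a.1 = D), f a)
          = ∑ a ∈ A.filter (fun a => a.2 = D), f a) ∧
      (∑ a ∈ A.filter (fun a => a.2 = t), f a)
        - (∑ a ∈ A.filter (fun a => a.1 = t), f a) = 1) ↔
    (∀ C : Finset V,
      (∑ a ∈ A.filter (fun a => a.1 ∈ C ∧ a.2 ∉ C), u a)
        - (∑ a ∈ A.filter (fun a => a.1 ∉ C ∧ a.2 ∈ C), l a) ≥
      (if s ∈ C ∧ t ∉ C then 1 else if t ∈ C ∧ s ∉ C then -1 else 0)) := by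
  have hbalance : ∑ D, (Pi.single s 1 - Pi.single t 1 : V → ℝ) D = 0 := by
    simp [sum_sub_distrib]
  refine (exists_congr fun f => ?_).trans
    ((Network.exists_netOutflow_eq_iff_forall_sum_le_cutCapacity hlu hbalance).trans
      (forall_congr' fun C => by rw [sum_single_sub_single, ge_iff_le]; rfl))
  rw [Network.netOutflow_eq_single_sub_single_iff A hst, Network.netOutflow_apply,
    Network.netOutflow_apply]
  constructor
  · rintro ⟨-, hf, hs, hD, ht⟩
    exact ⟨hf, hs, fun D hDs hDt => sub_eq_zero.2 (hD D hDs hDt), by linarith⟩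
  · rintro ⟨hf, hs, hD, ht⟩
    exact ⟨fun a ha => (hl0 a ha).trans (hf a ha).1, hf, hs,
      fun D hDs hDt => sub_eq_zero.1 (hD D hDs hDt), by linarith⟩
end

section
/- Let X be a finite set, and let μ be a probability distribution on the set ℒ of strict linear orders on X. Define r(D, D∪{x}) = μ({≻ : y ≻ x for all y ∈ X∖(D∪x) and x ≻ z for all z ∈ D}) for each arc of the Boolean lattice. Then r is a nonnegative flow from ∅ to X: Σ_{x∈X} r(X∖x, X) = 1 and, for each D with 1 ≤ |D| ≤ |X|−1, Σ_{x∈D} r(D∖x, D) = Σ_{y∉D} r(D, D∪y). -/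
/-!
Fix a ranking `≻`. The only arcs `(D, D ∪ {x})` whose event holds for `≻` are those with
`D = {z | x ≻ z}`, so they form the chain `∅ ⊂ … ⊂ X` of down-closed sets of `≻`. A nonempty
down-closed set `D` is entered exactly once, through its `≻`-top element, and a proper one is left
exactly once, through the `≻`-least element of its complement. Hence each ranking contributes a
unit path flow from `∅` to `X`, and `r` is the `μ`-mixture of these flows.
-/

open Finset

variable {α : Type*} [Fintype α] [DecidableEq α]

/-- A strict linear order (ranking) on the finite set `α`. -/
def Ranking (α : Type*) [Fintype α] [DecidableEq α] : Type _ :=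
  {r : α → α → Bool //
    (∀ x, ¬ r x x) ∧ (∀ x y z, r x y → r y z → r x z) ∧
    (∀ x y, x ≠ y → r x y ∨ r y x)}

instance : Fintype (Ranking α) := Subtype.fintype _

theorem Fintype.sum_ite_eq_ite_exists_of_injective {ι β M : Type*} [Fintype ι] [DecidableEq β]
    [AddCommMonoid M] {f : ι → β} (hf : Function.Injective f) (b : β) (c : M)
    [Decidable (∃ i, f i = b)] :
    ∑ i, (if f i = b then c else 0) = if ∃ i, f i = b then c else 0 := by
  split_ifs with h
  · obtain ⟨i, rfl⟩ := h
    rw [Fintype.sum_eq_single i fun j hj => if_neg (hf.ne hj), if_pos rfl]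
  · exact Finset.sum_eq_zero fun i _ => if_neg fun hi => h ⟨i, hi⟩

namespace Ranking

variable (p : Ranking α) {x y z : α} {D S : Finset α}

lemma rel_irrefl (x : α) : ¬ p.1 x x := p.2.1 x

lemma rel_trans : p.1 x y → p.1 y z → p.1 x z := p.2.2.1 x y z

lemma rel_total (h : x ≠ y) : p.1 x y ∨ p.1 y x := p.2.2.2 x y h

lemma rel_asymm (h : p.1 x y) : ¬ p.1 y x := fun h' => p.rel_irrefl x (p.rel_trans h h')

def below (x : α) : Finset α := {z | p.1 x z}

def atMost (x : α) : Finset α := insert x (p.below x)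

def IsDownClosed (D : Finset α) : Prop := ∀ a ∈ D, ∀ b, p.1 a b → b ∈ D

instance : DecidablePred p.IsDownClosed := fun _ => by unfold IsDownClosed; infer_instance

@[simp] lemma mem_below : z ∈ p.below x ↔ p.1 x z := by simp [below]

lemma self_notMem_below (x : α) : x ∉ p.below x := by simp [rel_irrefl]

lemma below_ssubset_below (h : p.1 x y) : p.below y ⊂ p.below x :=
  ssubset_iff_of_subset (fun z hz => by simpa using p.rel_trans h (by simpa using hz)) |>.2
    ⟨y, by simpa using h, p.self_notMem_below y⟩

lemma below_injective : Function.Injective p.below := by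
  intro x y hxy
  by_contra hne
  rcases p.rel_total hne with h | h
  · exact (p.below_ssubset_below h).ne hxy.symm
  · exact (p.below_ssubset_below h).ne hxy

lemma atMost_injective : Function.Injective p.atMost := by
  intro x y hxy
  by_contra hne
  have hx : x ∈ p.atMost y := hxy ▸ mem_insert_self x _
  have hy : y ∈ p.atMost x := hxy ▸ mem_insert_self y _
  simp only [atMost, mem_insert, hne, Ne.symm hne, mem_below, false_or] at hx hy
  exact p.rel_asymm hx hy

lemma exists_top (hS : S.Nonempty) : ∃ x ∈ S, ∀ z ∈ S, z ≠ x → p.1 x z := by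
  obtain ⟨x, hx, hmax⟩ := S.exists_max_image (fun x => #(p.below x)) hS
  refine ⟨x, hx, fun z hz hzx => (p.rel_total hzx.symm).resolve_right fun h => ?_⟩
  exact (card_lt_card (p.below_ssubset_below h)).not_ge (hmax z hz)

lemma exists_bot (hS : S.Nonempty) : ∃ y ∈ S, ∀ z ∈ S, z ≠ y → p.1 z y := by
  obtain ⟨y, hy, hmin⟩ := S.exists_min_image (fun x => #(p.below x)) hS
  refine ⟨y, hy, fun z hz hzy => (p.rel_total hzy).resolve_right fun h => ?_⟩
  exact (card_lt_card (p.below_ssubset_below h)).not_ge (hmin z hz)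

lemma below_eq_iff :
    p.below x = D ↔ (∀ y, y ∉ D → y ≠ x → p.1 y x) ∧ ∀ z ∈ D, p.1 x z := by
  constructor
  · rintro rfl
    exact ⟨fun y hy hyx => (p.rel_total hyx).resolve_right (by simpa using hy),
      fun z hz => (p.mem_below).1 hz⟩
  · rintro ⟨habove, hbelow⟩
    ext z
    refine ⟨fun h => by_contra fun hz => p.rel_asymm ((p.mem_below).1 h) (habove z hz ?_),
      fun hz => (p.mem_below).2 (hbelow z hz)⟩
    rintro rfl
    exact p.self_notMem_below z h

lemma atMost_eq_iff : p.atMost x = D ↔ x ∈ D ∧ p.below x = D \ {x} := by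
  constructor
  · rintro rfl
    exact ⟨mem_insert_self x _, by
      rw [atMost, sdiff_singleton_eq_erase, erase_insert (p.self_notMem_below x)]⟩
  · rintro ⟨hx, h⟩
    rw [atMost, h, sdiff_singleton_eq_erase, insert_erase hx]

lemma isDownClosed_below (y : α) : p.IsDownClosed (p.below y) := fun a ha b hab => by
  simpa using p.rel_trans ((p.mem_below).1 ha) hab

lemma isDownClosed_atMost (x : α) : p.IsDownClosed (p.atMost x) := fun a ha b hab => by
  rcases mem_insert.1 ha with rfl | ha
  · exact mem_insert_of_mem ((p.mem_below).2 hab)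
  · exact mem_insert_of_mem (p.isDownClosed_below x a ha b hab)

lemma exists_atMost_eq_iff : (∃ x, p.atMost x = D) ↔ p.IsDownClosed D ∧ D.Nonempty := by
  constructor
  · rintro ⟨x, rfl⟩
    exact ⟨p.isDownClosed_atMost x, x, mem_insert_self x _⟩
  · rintro ⟨hD, hne⟩
    obtain ⟨x, hx, htop⟩ := p.exists_top hne
    refine ⟨x, ext fun z => ⟨fun hz => ?_, fun hz => ?_⟩⟩
    · rcases mem_insert.1 hz with rfl | hz
      exacts [hx, hD x hx z ((p.mem_below).1 hz)]
    · by_cases hzx : z = x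
      · exact hzx ▸ mem_insert_self z _
      · exact mem_insert_of_mem ((p.mem_below).2 (htop z hz hzx))

lemma exists_below_eq_iff : (∃ y, p.below y = D) ↔ p.IsDownClosed D ∧ D ≠ univ := by
  constructor
  · rintro ⟨y, rfl⟩
    exact ⟨p.isDownClosed_below y, fun h => p.self_notMem_below y (h ▸ mem_univ y)⟩
  · rintro ⟨hD, hne⟩
    have hcompl : Dᶜ.Nonempty := nonempty_iff_ne_empty.2 fun h => hne ((compl_eq_empty_iff D).1 h)
    obtain ⟨y, hy, hbot⟩ := p.exists_bot hcompl
    rw [mem_compl] at hy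
    refine ⟨y, ext fun z => ⟨fun hz => by_contra fun hzD => ?_, fun hz => ?_⟩⟩
    · have hyz := (p.mem_below).1 hz
      have hzy : z ≠ y := by rintro rfl; exact p.rel_irrefl z hyz
      exact p.rel_asymm hyz (hbot z (mem_compl.2 hzD) hzy)
    · have hyz : y ≠ z := by rintro rfl; exact hy hz
      exact (p.mem_below).2 <| (p.rel_total hyz).resolve_right fun h => hy (hD z hz y h)

variable {M : Type*} [AddCommMonoid M]

lemma sum_ite_below_eq_sdiff (D : Finset α) (c : M) :
    ∑ x ∈ D, (if p.below x = D \ {x} then c else 0) =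
      if p.IsDownClosed D ∧ D.Nonempty then c else 0 := by
  rw [← if_congr p.exists_atMost_eq_iff rfl rfl,
    ← Fintype.sum_ite_eq_ite_exists_of_injective p.atMost_injective]
  simp only [atMost_eq_iff, ite_and, sum_ite_mem, univ_inter]

lemma sum_compl_ite_below_eq (D : Finset α) (c : M) :
    ∑ y ∈ Dᶜ, (if p.below y = D then c else 0) =
      if p.IsDownClosed D ∧ D ≠ univ then c else 0 := by
  rw [← if_congr p.exists_below_eq_iff rfl rfl,
    ← Fintype.sum_ite_eq_ite_exists_of_injective p.below_injective]
  refine sum_subset (subset_univ _) fun y _ hy => if_neg ?_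
  rintro rfl
  exact p.self_notMem_below y (by simpa using hy)

end Ranking

/-- For a probability distribution `μ` on rankings, the flow on the arc
`(D, D ∪ {x})` given by
`r(D, D∪{x}) = μ({≻ : y ≻ x ∀ y ∈ X∖(D∪x), and x ≻ z ∀ z ∈ D})`
is a nonnegative flow from `∅` to `X`. -/
theorem stmt_19 [Nonempty α] (μ : Ranking α → ℝ) (hμ0 : ∀ p, 0 ≤ μ p)
    (hμ1 : ∑ p : Ranking α, μ p = 1)
    (r : Finset α → α → ℝ)
    (hr : r = fun D x => ∑ p : Ranking α,
      if (∀ y, y ∉ D → y ≠ x → p.1 y x) ∧ (∀ z ∈ D, p.1 x z) then μ p else 0) :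
    (∀ (D : Finset α) (x : α), 0 ≤ r D x) ∧
    (∑ x : α, r (Finset.univ \ {x}) x = 1) ∧
    (∀ D : Finset α, D.Nonempty → D ≠ Finset.univ →
      ∑ x ∈ D, r (D \ {x}) x = ∑ y ∈ Dᶜ, r D y) := by
  have hr' : ∀ D x, r D x = ∑ p : Ranking α, if p.below x = D then μ p else 0 := by
    simp only [hr, Ranking.below_eq_iff, implies_true]
  refine ⟨fun D x => ?_, ?_, fun D hD hDu => ?_⟩
  · rw [hr']
    exact sum_nonneg fun p _ => ite_nonneg (hμ0 p) le_rfl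
  · simp only [hr']
    rw [sum_comm, ← hμ1]
    refine sum_congr rfl fun p _ => ?_
    rw [p.sum_ite_below_eq_sdiff univ]
    exact if_pos ⟨fun _ _ _ _ => mem_univ _, univ_nonempty⟩
  · simp only [hr']
    rw [sum_comm, sum_comm (s := Dᶜ)]
    refine sum_congr rfl fun p _ => ?_
    rw [p.sum_ite_below_eq_sdiff, p.sum_compl_ite_below_eq]
    simp only [hD, hDu, and_true, ne_eq, not_false_eq_true]
end
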